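/- Let α ∈ (0,2) and let {ξ^k}, {w̃^k}, {ξ̃^k} for k = 0,1,…,N be generated by the parallel splitting ALM step followed by the rank-two relaxation step ξ^{k+1} = ξ^k − αℳ(ξ^k − ξ̃^k). Define the ergodic average w̄_N = (1/(N+1)) Σ_{k=0}^N w̃^k with first components x̄_N. Then w̄_N ∈ Ω and, for every w = (x_1,…,x_p,λ) ∈ Ω with ξ = Pw: θ(x̄_N) − θ(x) + (w̄_N − w)ᵀF(w) ≤ (1/(2α(N+1)))‖ξ − ξ^0‖²_ℋ. -/

import Mathlib

open Matrix
open scoped Kronecker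

noncomputable section

/-- `Q₀ = [β I_p, e_p; −e_pᵀ, 1/β]`. -/
def Q0 (p : ℕ) (β : ℝ) : Matrix (Fin p ⊕ Unit) (Fin p ⊕ Unit) ℝ :=
  Matrix.fromBlocks (β • (1 : Matrix (Fin p) (Fin p) ℝ))
    (Matrix.of fun _ _ => (1 : ℝ))
    (Matrix.of fun _ _ => (-1 : ℝ))
    (Matrix.of fun _ _ => 1 / β)

/-- `D₀ = diag(β, …, β, 1/β)`. -/
def D0 (p : ℕ) (β : ℝ) : Matrix (Fin p ⊕ Unit) (Fin p ⊕ Unit) ℝ :=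
  Matrix.fromBlocks (β • (1 : Matrix (Fin p) (Fin p) ℝ)) 0 0
    (Matrix.of fun _ _ => 1 / β)

/-- `M₀ = I_{p+1} − (1/(p+1))·[e_p e_pᵀ, −(1/β)e_p; β e_pᵀ, p]`. -/
def M0 (p : ℕ) (β : ℝ) : Matrix (Fin p ⊕ Unit) (Fin p ⊕ Unit) ℝ :=
  1 - (1 / (p + 1 : ℝ)) •
    Matrix.fromBlocks (Matrix.of fun _ _ => (1 : ℝ))
      (Matrix.of fun _ _ => -(1 / β))
      (Matrix.of fun _ _ => (β : ℝ))
      (Matrix.of fun _ _ => (p : ℝ))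

/-- `H₀ = [β(I_p + e_p e_pᵀ), 0; 0, (p+1)/β]`. -/
def H0 (p : ℕ) (β : ℝ) : Matrix (Fin p ⊕ Unit) (Fin p ⊕ Unit) ℝ :=
  Matrix.fromBlocks (β • ((1 : Matrix (Fin p) (Fin p) ℝ) + Matrix.of fun _ _ => (1 : ℝ))) 0 0
    (Matrix.of fun _ _ => (p + 1 : ℝ) / β)

/-- `𝒬 = Q₀ ⊗ I_m`. -/
def calQ (p m : ℕ) (β : ℝ) : Matrix ((Fin p ⊕ Unit) × Fin m) ((Fin p ⊕ Unit) × Fin m) ℝ :=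
  Q0 p β ⊗ₖ (1 : Matrix (Fin m) (Fin m) ℝ)

/-- `𝒟 = D₀ ⊗ I_m`. -/
def calD (p m : ℕ) (β : ℝ) : Matrix ((Fin p ⊕ Unit) × Fin m) ((Fin p ⊕ Unit) × Fin m) ℝ :=
  D0 p β ⊗ₖ (1 : Matrix (Fin m) (Fin m) ℝ)

/-- `ℳ = M₀ ⊗ I_m`. -/
def calM (p m : ℕ) (β : ℝ) : Matrix ((Fin p ⊕ Unit) × Fin m) ((Fin p ⊕ Unit) × Fin m) ℝ :=
  M0 p β ⊗ₖ (1 : Matrix (Fin m) (Fin m) ℝ)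

/-- `ℋ = H₀ ⊗ I_m`. -/
def calH (p m : ℕ) (β : ℝ) : Matrix ((Fin p ⊕ Unit) × Fin m) ((Fin p ⊕ Unit) × Fin m) ℝ :=
  H0 p β ⊗ₖ (1 : Matrix (Fin m) (Fin m) ℝ)

/-- `‖v‖²_G = vᵀ G v`. -/
def nsq {p m : ℕ} (G : Matrix ((Fin p ⊕ Unit) × Fin m) ((Fin p ⊕ Unit) × Fin m) ℝ)
    (v : (Fin p ⊕ Unit) × Fin m → ℝ) : ℝ :=
  v ⬝ᵥ G.mulVec v

/-- `θ(x) = Σ_i θ_i(x_i)`. -/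
def thetaSum {p : ℕ} {n : Fin p → ℕ} (θ : (i : Fin p) → (Fin (n i) → ℝ) → ℝ)
    (x : (i : Fin p) → Fin (n i) → ℝ) : ℝ :=
  ∑ i, θ i (x i)

/-- The Euclidean inner product on `ℝ^{n_1}×⋯×ℝ^{n_p}×ℝ^m`. -/
def dotW {p m : ℕ} {n : Fin p → ℕ}
    (w w' : ((i : Fin p) → Fin (n i) → ℝ) × (Fin m → ℝ)) : ℝ :=
  (∑ i, w.1 i ⬝ᵥ w'.1 i) + w.2 ⬝ᵥ w'.2

/-- `F(w) = (−A_1ᵀλ, …, −A_pᵀλ, Σ_i A_i x_i − b)`. -/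
def Fop {p m : ℕ} {n : Fin p → ℕ} (A : (i : Fin p) → Matrix (Fin m) (Fin (n i)) ℝ)
    (b : Fin m → ℝ) (w : ((i : Fin p) → Fin (n i) → ℝ) × (Fin m → ℝ)) :
    ((i : Fin p) → Fin (n i) → ℝ) × (Fin m → ℝ) :=
  (fun i => -((A i)ᵀ.mulVec w.2), (∑ i, (A i).mulVec (w.1 i)) - b)

/-- `Pw = (A_1 x_1, …, A_p x_p, λ) ∈ ℝ^{(p+1)m}`. -/
def Pmap {p m : ℕ} {n : Fin p → ℕ} (A : (i : Fin p) → Matrix (Fin m) (Fin (n i)) ℝ)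
    (w : ((i : Fin p) → Fin (n i) → ℝ) × (Fin m → ℝ)) :
    (Fin p ⊕ Unit) × Fin m → ℝ :=
  fun q => Sum.elim (fun i => (A i).mulVec (w.1 i) q.2) (fun _ => w.2 q.2) q.1

/-- `Ω = 𝒳_1 × ⋯ × 𝒳_p × ℝ^m`. -/
def OmegaSet {p : ℕ} (m : ℕ) {n : Fin p → ℕ} (X : (i : Fin p) → Set (Fin (n i) → ℝ)) :
    Set (((i : Fin p) → Fin (n i) → ℝ) × (Fin m → ℝ)) :=
  {w | ∀ i, w.1 i ∈ X i}

/-- The solution set `Ω*` of the variational inequality VI(Ω,F,θ). -/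
def VIsol {p m : ℕ} {n : Fin p → ℕ} (θ : (i : Fin p) → (Fin (n i) → ℝ) → ℝ)
    (X : (i : Fin p) → Set (Fin (n i) → ℝ))
    (A : (i : Fin p) → Matrix (Fin m) (Fin (n i)) ℝ) (b : Fin m → ℝ) :
    Set (((i : Fin p) → Fin (n i) → ℝ) × (Fin m → ℝ)) :=
  {ws | ws ∈ OmegaSet m X ∧ ∀ w ∈ OmegaSet m X,
    thetaSum θ w.1 - thetaSum θ ws.1 + dotW (w - ws) (Fop A b ws) ≥ 0}

/-- The `λ`-component of `ξ = (u_1, …, u_p, λ)`. -/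
def lamOf {p m : ℕ} (ξ : (Fin p ⊕ Unit) × Fin m → ℝ) : Fin m → ℝ :=
  fun j => ξ (Sum.inr (), j)

/-- The `u_i`-component of `ξ = (u_1, …, u_p, λ)`. -/
def uOf {p m : ℕ} (ξ : (Fin p ⊕ Unit) × Fin m → ℝ) (i : Fin p) : Fin m → ℝ :=
  fun j => ξ (Sum.inl i, j)

/-- The parallel splitting ALM step: with input `ξ = (u_1, …, u_p, λ)` it produces
`w̃ = (x̃_1, …, x̃_p, λ̃)` where each `x̃_i ∈ 𝒳_i` minimizes
`x_i ↦ θ_i(x_i) − λᵀ A_i x_i + (β/2)‖A_i x_i − u_i‖²` over `𝒳_i`, and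
`λ̃ = λ − β(Σ_i u_i − b)`. -/
def ALMStep {p m : ℕ} {n : Fin p → ℕ} (β : ℝ) (θ : (i : Fin p) → (Fin (n i) → ℝ) → ℝ)
    (X : (i : Fin p) → Set (Fin (n i) → ℝ))
    (A : (i : Fin p) → Matrix (Fin m) (Fin (n i)) ℝ) (b : Fin m → ℝ)
    (ξ : (Fin p ⊕ Unit) × Fin m → ℝ)
    (wt : ((i : Fin p) → Fin (n i) → ℝ) × (Fin m → ℝ)) : Prop :=
  (∀ i, wt.1 i ∈ X i ∧ ∀ y ∈ X i,
      θ i (wt.1 i) - lamOf ξ ⬝ᵥ (A i).mulVec (wt.1 i) +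
          β / 2 * (((A i).mulVec (wt.1 i) - uOf ξ i) ⬝ᵥ ((A i).mulVec (wt.1 i) - uOf ξ i)) ≤
        θ i y - lamOf ξ ⬝ᵥ (A i).mulVec y +
          β / 2 * (((A i).mulVec y - uOf ξ i) ⬝ᵥ ((A i).mulVec y - uOf ξ i))) ∧
  wt.2 = lamOf ξ - β • ((∑ i, uOf ξ i) - b)

/-! Optimality of the subproblems and skew-symmetry of the affine operator `F` give, for
every `w ∈ Ω` with `ξ = Pw`, `θ(x) - θ(x̃ᵏ) + (w - w̃ᵏ)ᵀF(w) ≥ (ξ - ξ̃ᵏ)ᵀ𝒬(ξᵏ - ξ̃ᵏ)`, where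
`𝒬 = ℋℳ`. Since `ℳᵀℋℳ = 𝒟` is the symmetric part of `𝒬` and `𝒟 ⪰ 0`, the relaxation
step with `α ≤ 2` bounds the right-hand side below by
`(‖ξ - ξᵏ⁺¹‖²_ℋ - ‖ξ - ξᵏ‖²_ℋ) / (2α)`, which telescopes. Averaging over `k` and Jensen's
inequality for the convex gap function `v ↦ θ(v) - θ(x) + (v - w)ᵀF(w)` give the rate. -/

namespace Matrix

variable {ι : Type*} [Fintype ι]

theorem IsSymm.dotProduct_mulVec_comm {H : Matrix ι ι ℝ} (hH : H.IsSymm) (x y : ι → ℝ) :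
    x ⬝ᵥ H *ᵥ y = y ⬝ᵥ H *ᵥ x := by
  rw [dotProduct_mulVec y, dotProduct_comm, ← mulVec_transpose, hH.eq]

theorem mulVec_dotProduct_mulVec (M H : Matrix ι ι ℝ) (x y : ι → ℝ) :
    (M *ᵥ x) ⬝ᵥ H *ᵥ y = x ⬝ᵥ (Mᵀ * H) *ᵥ y := by
  rw [← vecMul_transpose, ← dotProduct_mulVec, mulVec_mulVec]

theorem dotProduct_mulVec_eq_of_add_transpose {Q D : Matrix ι ι ℝ}
    (hQD : Q + Qᵀ = (2 : ℝ) • D) (x : ι → ℝ) : x ⬝ᵥ Q *ᵥ x = x ⬝ᵥ D *ᵥ x := by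
  have h := congrArg (fun A => x ⬝ᵥ A *ᵥ x) hQD
  simp only [add_mulVec, dotProduct_add, dotProduct_transpose_mulVec, smul_mulVec,
    dotProduct_smul, smul_eq_mul] at h
  linarith

theorem relaxation_le {H M D : Matrix ι ι ℝ} (hH : H.IsSymm) (hMHM : Mᵀ * H * M = D)
    (hQD : H * M + (H * M)ᵀ = (2 : ℝ) • D) (hD : D.PosSemidef) {α : ℝ} (hα0 : 0 ≤ α)
    (hα2 : α ≤ 2) {v ξ ξt ξ' : ι → ℝ} (hξ' : ξ' = ξ - α • M *ᵥ (ξ - ξt)) :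
    (v - ξ') ⬝ᵥ H *ᵥ (v - ξ') - (v - ξ) ⬝ᵥ H *ᵥ (v - ξ) ≤
      2 * α * ((v - ξt) ⬝ᵥ (H * M) *ᵥ (ξ - ξt)) := by
  rw [show v - ξ' = (v - ξ) + α • M *ᵥ (ξ - ξt) by rw [hξ']; abel,
    show v - ξt = (v - ξ) + (ξ - ξt) by abel]
  generalize v - ξ = a, ξ - ξt = d
  have hd : 0 ≤ d ⬝ᵥ D *ᵥ d := by simpa using hD.dotProduct_mulVec_nonneg d
  have hHM : d ⬝ᵥ (H * M) *ᵥ d = d ⬝ᵥ D *ᵥ d := dotProduct_mulVec_eq_of_add_transpose hQD d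
  have hMM : (M *ᵥ d) ⬝ᵥ H *ᵥ (M *ᵥ d) = d ⬝ᵥ D *ᵥ d := by
    rw [mulVec_dotProduct_mulVec, ← hMHM, mulVec_mulVec, Matrix.mul_assoc]
  have hsymm := hH.dotProduct_mulVec_comm (M *ᵥ d) a
  have hcross : a ⬝ᵥ H *ᵥ (M *ᵥ d) = a ⬝ᵥ (H * M) *ᵥ d := by rw [mulVec_mulVec]
  simp only [mulVec_add, mulVec_smul, dotProduct_add, add_dotProduct, dotProduct_smul,
    smul_dotProduct, smul_eq_mul]
  rw [hsymm, hcross, hMM, hHM]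
  nlinarith [mul_nonneg (mul_nonneg hα0 (sub_nonneg.2 hα2)) hd]

theorem dotProduct_kronecker_one_mulVec {κ : Type*} [Fintype κ] [DecidableEq κ]
    (K : Matrix ι ι ℝ) (a d : ι × κ → ℝ) :
    a ⬝ᵥ (K ⊗ₖ (1 : Matrix κ κ ℝ)) *ᵥ d =
      ∑ r, ∑ s, K r s * ((fun j => a (r, j)) ⬝ᵥ fun j => d (s, j)) := by
  simp only [dotProduct, mulVec, Fintype.sum_prod_type, kroneckerMap_apply, one_apply,
    mul_ite, mul_one, mul_zero, ite_mul, zero_mul, Finset.sum_ite_eq, Finset.mem_univ, if_true,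
    Finset.mul_sum]
  refine Finset.sum_congr rfl fun r _ => ?_
  rw [Finset.sum_comm]
  exact Finset.sum_congr rfl fun s _ => Finset.sum_congr rfl fun j _ => by ring

end Matrix

section BlockMatrices

variable {p m : ℕ} {β : ℝ}

theorem H0_mul_M0 (hβ : β ≠ 0) : H0 p β * M0 p β = Q0 p β := by
  ext (i | i) (j | j) <;>
    simp [H0, M0, Q0, mul_apply, Fintype.sum_sum_type, one_apply, add_mul, mul_sub,
      Finset.sum_add_distrib, Finset.sum_sub_distrib] <;>
    field_simp <;> ring

theorem M0_transpose_mul_Q0 (hβ : β ≠ 0) : (M0 p β)ᵀ * Q0 p β = D0 p β := by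
  ext (i | i) (j | j) <;>
    simp [D0, M0, Q0, mul_apply, Fintype.sum_sum_type, one_apply, sub_mul,
      Finset.sum_sub_distrib] <;>
    field_simp <;> ring

theorem Q0_add_transpose : Q0 p β + (Q0 p β)ᵀ = (2 : ℝ) • D0 p β := by
  ext (i | i) (j | j) <;> simp [D0, Q0, one_apply, eq_comm] <;> (try split_ifs) <;> ring

theorem D0_eq_diagonal : D0 p β = diagonal (Sum.elim (fun _ => β) fun _ => 1 / β) := by
  ext (i | i) (j | j) <;> simp [D0, one_apply, diagonal_apply]

theorem H0_eq_diagonal_add_vecMulVec :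
    H0 p β = diagonal (Sum.elim (fun _ => β) fun _ => (p + 1) / β) +
      β • vecMulVec (Sum.elim 1 0) (Sum.elim 1 0) := by
  ext (i | i) (j | j) <;> simp [H0, one_apply, diagonal_apply, vecMulVec_apply]

theorem posSemidef_D0 (hβ : 0 < β) : (D0 p β).PosSemidef := by
  rw [D0_eq_diagonal]
  exact .diagonal fun i => by cases i <;> simp [hβ.le]

theorem posSemidef_H0 (hβ : 0 < β) : (H0 p β).PosSemidef := by
  rw [H0_eq_diagonal_add_vecMulVec]
  refine .add (.diagonal fun i => ?_) (.smul ?_ hβ.le)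
  · cases i <;> simp only [Sum.elim_inl, Sum.elim_inr] <;> positivity
  · simpa using posSemidef_vecMulVec_self_star (Sum.elim (1 : Fin p → ℝ) (0 : Unit → ℝ))

theorem calH_mul_calM (hβ : β ≠ 0) : calH p m β * calM p m β = calQ p m β := by
  rw [calH, calM, calQ, ← mul_kronecker_mul, H0_mul_M0 hβ, Matrix.mul_one]

theorem calM_transpose_mul_calH_mul_calM (hβ : β ≠ 0) :
    (calM p m β)ᵀ * calH p m β * calM p m β = calD p m β := by
  rw [Matrix.mul_assoc, calH_mul_calM hβ, calM, calQ, calD, ← kroneckerMap_transpose,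
    transpose_one, ← mul_kronecker_mul, M0_transpose_mul_Q0 hβ, Matrix.mul_one]

theorem calQ_add_transpose : calQ p m β + (calQ p m β)ᵀ = (2 : ℝ) • calD p m β := by
  rw [calQ, calD, ← kroneckerMap_transpose, transpose_one, ← add_kronecker, Q0_add_transpose,
    smul_kronecker]

theorem posSemidef_calD (hβ : 0 < β) : (calD p m β).PosSemidef :=
  (posSemidef_D0 hβ).kronecker .one

theorem posSemidef_calH (hβ : 0 < β) : (calH p m β).PosSemidef :=
  (posSemidef_H0 hβ).kronecker .one

theorem nsq_calH_nonneg (hβ : 0 < β) (v : (Fin p ⊕ Unit) × Fin m → ℝ) :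
    0 ≤ nsq (calH p m β) v := by
  simpa [nsq] using (posSemidef_calH hβ).dotProduct_mulVec_nonneg v

theorem relaxation_calH_le (hβ : 0 < β) {α : ℝ} (hα0 : 0 ≤ α) (hα2 : α ≤ 2)
    {v ξ ξt ξ' : (Fin p ⊕ Unit) × Fin m → ℝ}
    (hξ' : ξ' = ξ - α • calM p m β *ᵥ (ξ - ξt)) :
    nsq (calH p m β) (v - ξ') - nsq (calH p m β) (v - ξ) ≤
      2 * α * ((v - ξt) ⬝ᵥ calQ p m β *ᵥ (ξ - ξt)) := by
  rw [← calH_mul_calM hβ.ne']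
  exact Matrix.relaxation_le (isHermitian_iff_isSymm.1 (posSemidef_calH hβ).isHermitian)
    (calM_transpose_mul_calH_mul_calM hβ.ne')
    (by rw [calH_mul_calM hβ.ne']; exact calQ_add_transpose) (posSemidef_calD hβ) hα0 hα2 hξ'

@[simp] theorem uOf_sub (a d : (Fin p ⊕ Unit) × Fin m → ℝ) (i : Fin p) :
    uOf (a - d) i = uOf a i - uOf d i := rfl

@[simp] theorem lamOf_sub (a d : (Fin p ⊕ Unit) × Fin m → ℝ) :
    lamOf (a - d) = lamOf a - lamOf d := rfl

@[simp] theorem uOf_Pmap {n : Fin p → ℕ} (A : (i : Fin p) → Matrix (Fin m) (Fin (n i)) ℝ)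
    (w : ((i : Fin p) → Fin (n i) → ℝ) × (Fin m → ℝ)) (i : Fin p) :
    uOf (Pmap A w) i = A i *ᵥ w.1 i := rfl

@[simp] theorem lamOf_Pmap {n : Fin p → ℕ} (A : (i : Fin p) → Matrix (Fin m) (Fin (n i)) ℝ)
    (w : ((i : Fin p) → Fin (n i) → ℝ) × (Fin m → ℝ)) :
    lamOf (Pmap A w) = w.2 := rfl

theorem dotProduct_calQ_mulVec (a d : (Fin p ⊕ Unit) × Fin m → ℝ) :
    a ⬝ᵥ calQ p m β *ᵥ d =
      β * ∑ i, uOf a i ⬝ᵥ uOf d i + (∑ i, uOf a i) ⬝ᵥ lamOf d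
        - lamOf a ⬝ᵥ ∑ i, uOf d i + β⁻¹ * (lamOf a ⬝ᵥ lamOf d) := by
  unfold uOf lamOf
  rw [calQ, Matrix.dotProduct_kronecker_one_mulVec]
  simp only [Q0, one_div, Fintype.sum_sum_type, Finset.univ_unique, PUnit.default_eq_unit,
    Finset.sum_singleton, Finset.sum_add_distrib, fromBlocks_apply₁₁, Matrix.smul_apply, one_apply,
    smul_eq_mul, mul_ite, mul_one, mul_zero, ite_mul, zero_mul, Finset.sum_ite_eq, Finset.mem_univ,
    ↓reduceIte, fromBlocks_apply₂₁, of_apply, neg_mul, one_mul, Finset.sum_neg_distrib,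
    fromBlocks_apply₁₂, fromBlocks_apply₂₂, Finset.mul_sum, sum_dotProduct, dotProduct_sum]
  ring

end BlockMatrices

theorem nonneg_of_forall_add_mul_nonneg {g c : ℝ} (hc : 0 ≤ c)
    (h : ∀ t : ℝ, 0 < t → t ≤ 1 → 0 ≤ g + t * c) : 0 ≤ g := by
  refine le_of_forall_pos_le_add fun ε hε => ?_
  set t := min 1 (ε / (c + 1))
  have ht0 : 0 < t := lt_min one_pos (by positivity)
  have htc : t * (c + 1) ≤ ε := (le_div_iff₀ (by positivity)).1 (min_le_right _ _)
  nlinarith [h t ht0 (min_le_left _ _)]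

/-- Compare the minimizer `x` with `x + t (y - x)` and let `t → 0`. -/
theorem sub_add_dotProduct_nonneg_of_isMinOn {ι κ : Type*} [Fintype ι] [Fintype κ]
    {θ : (ι → ℝ) → ℝ} {X : Set (ι → ℝ)} (hθ : ConvexOn ℝ X θ) (A : Matrix κ ι ℝ)
    (u l : κ → ℝ) {β : ℝ} (hβ : 0 ≤ β) {x : ι → ℝ}
    (hmin : IsMinOn (fun y => θ y - l ⬝ᵥ A *ᵥ y + β / 2 * ((A *ᵥ y - u) ⬝ᵥ (A *ᵥ y - u))) X x)
    (hx : x ∈ X) {y : ι → ℝ} (hy : y ∈ X) :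
    0 ≤ θ y - θ x + (A *ᵥ y - A *ᵥ x) ⬝ᵥ (β • (A *ᵥ x - u) - l) := by
  set e := A *ᵥ y - A *ᵥ x
  refine nonneg_of_forall_add_mul_nonneg (c := β / 2 * (e ⬝ᵥ e))
    (mul_nonneg (by positivity) (dotProduct_self_star_nonneg e)) fun t ht0 ht1 => ?_
  have hz : (1 - t) • x + t • y ∈ X := hθ.1 hx hy (by linarith) ht0.le (by ring)
  have hAz : A *ᵥ ((1 - t) • x + t • y) = A *ᵥ x + t • e := by
    simp only [e, mulVec_add, mulVec_smul]; module
  have hmin_z := isMinOn_iff.1 hmin _ hz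
  have hconv := hθ.2 hx hy (by linarith : 0 ≤ 1 - t) ht0.le (by ring)
  rw [hAz, show A *ᵥ x + t • e - u = (A *ᵥ x - u) + t • e by abel] at hmin_z
  generalize A *ᵥ x - u = r at hmin_z ⊢
  simp only [dotProduct_add, add_dotProduct, dotProduct_smul, smul_dotProduct, smul_eq_mul,
    dotProduct_sub] at hmin_z hconv ⊢
  rw [dotProduct_comm r e, dotProduct_comm l e] at hmin_z
  refine (mul_nonneg_iff_of_pos_left ht0).1 ?_
  linarith

section Iteration

variable {p m : ℕ} {n : Fin p → ℕ}

def viGap (θ : (i : Fin p) → (Fin (n i) → ℝ) → ℝ)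
    (A : (i : Fin p) → Matrix (Fin m) (Fin (n i)) ℝ) (b : Fin m → ℝ)
    (w v : ((i : Fin p) → Fin (n i) → ℝ) × (Fin m → ℝ)) : ℝ :=
  thetaSum θ v.1 - thetaSum θ w.1 + dotW (v - w) (Fop A b w)

theorem dotW_add_left (w w' v : ((i : Fin p) → Fin (n i) → ℝ) × (Fin m → ℝ)) :
    dotW (w + w') v = dotW w v + dotW w' v := by
  simp only [dotW, Prod.fst_add, Prod.snd_add, Pi.add_apply, add_dotProduct,
    Finset.sum_add_distrib]
  ring

theorem dotW_smul_left (c : ℝ) (w v : ((i : Fin p) → Fin (n i) → ℝ) × (Fin m → ℝ)) :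
    dotW (c • w) v = c * dotW w v := by
  simp only [dotW, Prod.smul_fst, Prod.smul_snd, Pi.smul_apply, smul_dotProduct, smul_eq_mul,
    ← Finset.mul_sum]
  ring

theorem dotW_Fop (A : (i : Fin p) → Matrix (Fin m) (Fin (n i)) ℝ) (b : Fin m → ℝ)
    (w v : ((i : Fin p) → Fin (n i) → ℝ) × (Fin m → ℝ)) :
    dotW w (Fop A b v) = -((∑ i, A i *ᵥ w.1 i) ⬝ᵥ v.2) + w.2 ⬝ᵥ ((∑ i, A i *ᵥ v.1 i) - b) := by
  simp only [dotW, Fop, dotProduct_neg, dotProduct_mulVec, vecMul_transpose, sum_dotProduct,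
    Finset.sum_neg_distrib]

theorem dotW_sub_Fop_comm (A : (i : Fin p) → Matrix (Fin m) (Fin (n i)) ℝ) (b : Fin m → ℝ)
    (w w' : ((i : Fin p) → Fin (n i) → ℝ) × (Fin m → ℝ)) :
    dotW (w - w') (Fop A b w') = dotW (w - w') (Fop A b w) := by
  simp only [dotW_Fop, Prod.fst_sub, Prod.snd_sub, Pi.sub_apply, mulVec_sub,
    Finset.sum_sub_distrib, dotProduct_sub, sub_dotProduct]
  simp only [dotProduct_comm]
  ring

theorem dotW_sub_Fop_eq {β : ℝ} (hβ : β ≠ 0) (A : (i : Fin p) → Matrix (Fin m) (Fin (n i)) ℝ)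
    (b : Fin m → ℝ) (ξ : (Fin p ⊕ Unit) × Fin m → ℝ)
    {w wt : ((i : Fin p) → Fin (n i) → ℝ) × (Fin m → ℝ)}
    (hlam : wt.2 = lamOf ξ - β • ((∑ i, uOf ξ i) - b)) :
    dotW (w - wt) (Fop A b wt) =
      ∑ i, (A i *ᵥ w.1 i - A i *ᵥ wt.1 i) ⬝ᵥ (β • (A i *ᵥ wt.1 i - uOf ξ i) - lamOf ξ) +
        (Pmap A w - Pmap A wt) ⬝ᵥ calQ p m β *ᵥ (ξ - Pmap A wt) := by
  have hβterms : ∑ i, (A i *ᵥ w.1 i - A i *ᵥ wt.1 i) ⬝ᵥ (β • (A i *ᵥ wt.1 i - uOf ξ i) - lamOf ξ)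
      + β * ∑ i, (A i *ᵥ w.1 i - A i *ᵥ wt.1 i) ⬝ᵥ (uOf ξ i - A i *ᵥ wt.1 i)
      = -((∑ i, (A i *ᵥ w.1 i - A i *ᵥ wt.1 i)) ⬝ᵥ lamOf ξ) := by
    rw [Finset.mul_sum, ← Finset.sum_add_distrib, sum_dotProduct, ← Finset.sum_neg_distrib]
    refine Finset.sum_congr rfl fun i _ => ?_
    simp only [dotProduct_sub, dotProduct_smul, smul_eq_mul]
    ring
  rw [dotProduct_calQ_mulVec, dotW_Fop]
  simp only [uOf_sub, lamOf_sub, uOf_Pmap, lamOf_Pmap, Prod.fst_sub, Prod.snd_sub, Pi.sub_apply,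
    mulVec_sub]
  rw [← add_assoc, ← add_sub_assoc, ← add_assoc, hβterms]
  simp only [Finset.sum_sub_distrib, hlam, dotProduct_sub, sub_dotProduct, dotProduct_smul,
    smul_dotProduct, smul_eq_mul]
  simp only [dotProduct_comm]
  field_simp
  ring

theorem convex_OmegaSet {X : (i : Fin p) → Set (Fin (n i) → ℝ)} (hX : ∀ i, Convex ℝ (X i)) :
    Convex ℝ (OmegaSet m X) :=
  fun _ hx _ hy _ _ ha hc hac i => hX i (hx i) (hy i) ha hc hac

theorem convexOn_viGap {θ : (i : Fin p) → (Fin (n i) → ℝ) → ℝ}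
    {X : (i : Fin p) → Set (Fin (n i) → ℝ)} (hθ : ∀ i, ConvexOn ℝ (X i) (θ i))
    (A : (i : Fin p) → Matrix (Fin m) (Fin (n i)) ℝ) (b : Fin m → ℝ)
    (w : ((i : Fin p) → Fin (n i) → ℝ) × (Fin m → ℝ)) :
    ConvexOn ℝ (OmegaSet m X) (viGap θ A b w) := by
  refine ⟨convex_OmegaSet fun i => (hθ i).1, fun x hx y hy a c ha hc hac => ?_⟩
  have hθsum : thetaSum θ (a • x + c • y).1 ≤ a * thetaSum θ x.1 + c * thetaSum θ y.1 := by
    simp only [thetaSum, Finset.mul_sum, ← Finset.sum_add_distrib]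
    exact Finset.sum_le_sum fun i _ => (hθ i).2 (hx i) (hy i) ha hc hac
  have hcomb : a • x + c • y - w = a • (x - w) + c • (y - w) := by
    rw [smul_sub, smul_sub, sub_add_sub_comm, ← add_smul, hac, one_smul]
  have hθw : a * thetaSum θ w.1 + c * thetaSum θ w.1 = thetaSum θ w.1 := by
    rw [← add_mul, hac, one_mul]
  simp only [viGap, smul_eq_mul, hcomb, dotW_add_left, dotW_smul_left]
  linarith

theorem prediction_le {β : ℝ} (hβ : 0 < β) {θ : (i : Fin p) → (Fin (n i) → ℝ) → ℝ}
    {X : (i : Fin p) → Set (Fin (n i) → ℝ)} (hθ : ∀ i, ConvexOn ℝ (X i) (θ i))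
    {A : (i : Fin p) → Matrix (Fin m) (Fin (n i)) ℝ} {b : Fin m → ℝ}
    {ξ : (Fin p ⊕ Unit) × Fin m → ℝ} {wt : ((i : Fin p) → Fin (n i) → ℝ) × (Fin m → ℝ)}
    (hstep : ALMStep β θ X A b ξ wt) {w : ((i : Fin p) → Fin (n i) → ℝ) × (Fin m → ℝ)}
    (hw : w ∈ OmegaSet m X) :
    (Pmap A w - Pmap A wt) ⬝ᵥ calQ p m β *ᵥ (ξ - Pmap A wt) ≤
      thetaSum θ w.1 - thetaSum θ wt.1 + dotW (w - wt) (Fop A b wt) := by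
  have hvi := Finset.sum_nonneg fun i (_ : i ∈ Finset.univ) =>
    sub_add_dotProduct_nonneg_of_isMinOn (hθ i) (A i) (uOf ξ i) (lamOf ξ) hβ.le
      (isMinOn_iff.2 (hstep.1 i).2) (hstep.1 i).1 (hw i)
  rw [Finset.sum_add_distrib, Finset.sum_sub_distrib] at hvi
  rw [dotW_sub_Fop_eq hβ.ne' A b ξ hstep.2, thetaSum, thetaSum]
  linarith

theorem viGap_le_of_step {β : ℝ} (hβ : 0 < β) {α : ℝ} (hα0 : 0 < α) (hα2 : α ≤ 2)
    {θ : (i : Fin p) → (Fin (n i) → ℝ) → ℝ} {X : (i : Fin p) → Set (Fin (n i) → ℝ)}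
    (hθ : ∀ i, ConvexOn ℝ (X i) (θ i)) {A : (i : Fin p) → Matrix (Fin m) (Fin (n i)) ℝ}
    {b : Fin m → ℝ} {ξ ξ' : (Fin p ⊕ Unit) × Fin m → ℝ}
    {wt : ((i : Fin p) → Fin (n i) → ℝ) × (Fin m → ℝ)} (hstep : ALMStep β θ X A b ξ wt)
    (hrel : ξ' = ξ - α • calM p m β *ᵥ (ξ - Pmap A wt))
    {w : ((i : Fin p) → Fin (n i) → ℝ) × (Fin m → ℝ)} (hw : w ∈ OmegaSet m X) :
    viGap θ A b w wt ≤
      (nsq (calH p m β) (Pmap A w - ξ) - nsq (calH p m β) (Pmap A w - ξ')) / (2 * α) := by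
  have hpred := prediction_le hβ hθ hstep hw
  have hrelax := relaxation_calH_le hβ hα0.le hα2 (v := Pmap A w) hrel
  have hskew : dotW (w - wt) (Fop A b wt) = -dotW (wt - w) (Fop A b w) := by
    rw [dotW_sub_Fop_comm, ← neg_sub, ← neg_one_smul ℝ (wt - w), dotW_smul_left, neg_one_mul]
  rw [viGap, le_div_iff₀ (by positivity)]
  nlinarith [mul_le_mul_of_nonneg_left hpred (by positivity : (0 : ℝ) ≤ 2 * α)]

end Iteration

theorem sum_range_succ_one_div (N : ℕ) :
    ∑ _k ∈ Finset.range (N + 1), 1 / (N + 1 : ℝ) = 1 := by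
  rw [Finset.sum_const, Finset.card_range, nsmul_eq_mul]
  push_cast
  field_simp

theorem Convex.smul_sum_range_mem {E : Type*} [AddCommGroup E] [Module ℝ E] {s : Set E}
    (hs : Convex ℝ s) {N : ℕ} {w : ℕ → E} (hw : ∀ k ≤ N, w k ∈ s) :
    (1 / (N + 1 : ℝ)) • ∑ k ∈ Finset.range (N + 1), w k ∈ s := by
  rw [Finset.smul_sum]
  exact hs.sum_mem (fun _ _ => by positivity) (sum_range_succ_one_div N)
    fun k hk => hw k (Finset.mem_range_succ_iff.1 hk)

theorem ConvexOn.map_smul_sum_range_le_of_le_sub {E : Type*} [AddCommGroup E] [Module ℝ E]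
    {s : Set E} {g : E → ℝ} (hg : ConvexOn ℝ s g) {N : ℕ} {w : ℕ → E} (hw : ∀ k ≤ N, w k ∈ s)
    {f : ℕ → ℝ} (hf : 0 ≤ f (N + 1)) (h : ∀ k ≤ N, g (w k) ≤ f k - f (k + 1)) :
    g ((1 / (N + 1 : ℝ)) • ∑ k ∈ Finset.range (N + 1), w k) ≤ f 0 / (N + 1) := by
  calc g ((1 / (N + 1 : ℝ)) • ∑ k ∈ Finset.range (N + 1), w k)
      ≤ ∑ k ∈ Finset.range (N + 1), (1 / (N + 1 : ℝ)) • g (w k) := by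
        rw [Finset.smul_sum]
        exact hg.map_sum_le (fun _ _ => by positivity) (sum_range_succ_one_div N)
          fun k hk => hw k (Finset.mem_range_succ_iff.1 hk)
    _ ≤ ∑ k ∈ Finset.range (N + 1), (1 / (N + 1 : ℝ)) * (f k - f (k + 1)) :=
        Finset.sum_le_sum fun k hk => mul_le_mul_of_nonneg_left
          (h k (Finset.mem_range_succ_iff.1 hk)) (by positivity)
    _ = (f 0 - f (N + 1)) / (N + 1) := by
        rw [← Finset.mul_sum, Finset.sum_range_sub']
        ring
    _ ≤ f 0 / (N + 1) := by gcongr; linarith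

theorem stmt15_general {p m : ℕ} {n : Fin p → ℕ}
    (θ : (i : Fin p) → (Fin (n i) → ℝ) → ℝ) (hθ : ∀ i, ConvexOn ℝ Set.univ (θ i))
    (X : (i : Fin p) → Set (Fin (n i) → ℝ))
    (hXconv : ∀ i, Convex ℝ (X i))
    (A : (i : Fin p) → Matrix (Fin m) (Fin (n i)) ℝ) (b : Fin m → ℝ)
    {β : ℝ} (hβ : 0 < β) {α : ℝ} (hα : α ∈ Set.Ioo (0 : ℝ) 2) (N : ℕ)
    (ξ : ℕ → ((Fin p ⊕ Unit) × Fin m → ℝ))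
    (wt : ℕ → ((i : Fin p) → Fin (n i) → ℝ) × (Fin m → ℝ))
    (hstep : ∀ k ≤ N, ALMStep β θ X A b (ξ k) (wt k))
    (hrel : ∀ k ≤ N, ξ (k + 1) = ξ k - α • (calM p m β).mulVec (ξ k - Pmap A (wt k)))
    (wbar : ((i : Fin p) → Fin (n i) → ℝ) × (Fin m → ℝ))
    (hwbar : wbar = (1 / (N + 1 : ℝ)) • ∑ k ∈ Finset.range (N + 1), wt k) :
    wbar ∈ OmegaSet m X ∧ ∀ w ∈ OmegaSet m X,
      thetaSum θ wbar.1 - thetaSum θ w.1 + dotW (wbar - w) (Fop A b w) ≤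
        1 / (2 * α * (N + 1)) * nsq (calH p m β) (Pmap A w - ξ 0) := by
  obtain ⟨hα0, hα2⟩ := hα
  have hθX i : ConvexOn ℝ (X i) (θ i) := (hθ i).subset (Set.subset_univ _) (hXconv i)
  have hwt : ∀ k ≤ N, wt k ∈ OmegaSet m X := fun k hk i => ((hstep k hk).1 i).1
  subst hwbar
  refine ⟨(convex_OmegaSet hXconv).smul_sum_range_mem hwt, fun w hw => ?_⟩
  have hrate := (convexOn_viGap hθX A b w).map_smul_sum_range_le_of_le_sub hwt
    (f := fun k => nsq (calH p m β) (Pmap A w - ξ k) / (2 * α))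
    (div_nonneg (nsq_calH_nonneg hβ _) (by positivity)) fun k hk =>
      (viGap_le_of_step hβ hα0 hα2.le hθX (hstep k hk) (hrel k hk) hw).trans_eq (sub_div _ _ _)
  calc _ = viGap θ A b w _ := rfl
    _ ≤ _ := hrate
    _ = _ := by field_simp

/-- Ergodic convergence rate: for the iterates generated for `k = 0,…,N` by the parallel
splitting ALM step followed by the relaxation step `ξ^{k+1} = ξ^k − αℳ(ξ^k − ξ̃^k)`,
the ergodic average `w̄_N = (1/(N+1)) Σ_{k=0}^N w̃^k` satisfies `w̄_N ∈ Ω` and for all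
`w ∈ Ω` (with `ξ = Pw`):
`θ(x̄_N) − θ(x) + (w̄_N − w)ᵀF(w) ≤ (1/(2α(N+1)))‖ξ − ξ^0‖²_ℋ`. -/
theorem stmt15 {p m : ℕ} {n : Fin p → ℕ} (hp : 1 ≤ p)
    (θ : (i : Fin p) → (Fin (n i) → ℝ) → ℝ) (hθ : ∀ i, ConvexOn ℝ Set.univ (θ i))
    (X : (i : Fin p) → Set (Fin (n i) → ℝ))
    (hXconv : ∀ i, Convex ℝ (X i)) (hXclosed : ∀ i, IsClosed (X i))
    (hXne : ∀ i, (X i).Nonempty)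
    (A : (i : Fin p) → Matrix (Fin m) (Fin (n i)) ℝ) (b : Fin m → ℝ)
    {β : ℝ} (hβ : 0 < β) {α : ℝ} (hα : α ∈ Set.Ioo (0 : ℝ) 2) (N : ℕ)
    (ξ : ℕ → ((Fin p ⊕ Unit) × Fin m → ℝ))
    (wt : ℕ → ((i : Fin p) → Fin (n i) → ℝ) × (Fin m → ℝ))
    (hstep : ∀ k ≤ N, ALMStep β θ X A b (ξ k) (wt k))
    (hrel : ∀ k ≤ N, ξ (k + 1) = ξ k - α • (calM p m β).mulVec (ξ k - Pmap A (wt k)))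
    (wbar : ((i : Fin p) → Fin (n i) → ℝ) × (Fin m → ℝ))
    (hwbar : wbar = (1 / (N + 1 : ℝ)) • ∑ k ∈ Finset.range (N + 1), wt k) :
    wbar ∈ OmegaSet m X ∧ ∀ w ∈ OmegaSet m X,
      thetaSum θ wbar.1 - thetaSum θ w.1 + dotW (wbar - w) (Fop A b w) ≤
        1 / (2 * α * (N + 1)) * nsq (calH p m β) (Pmap A w - ξ 0) :=
  stmt15_general θ hθ X hXconv A b hβ hα N ξ wt hstep hrel wbar hwbar
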